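/- arXiv:2311.14427 — 2 statements merged into one kernel-verified Lean document; each statement's English description precedes it below -/
import Mathlib

section
/- Let B₁ and B₂ be real matrices of sizes m×n and n×p with B₁ * B₂ = 0, and let L := B₁ᵀB₁ + B₂B₂ᵀ. Since ker(L) ⊆ ker(B₁) and range(B₂) ⊆ ker(B₁), the quotient map ker(B₁) → ker(B₁) ⧸ range(B₂) restricts to a linear isomorphism from the harmonic space ker(L) onto the homology space ker(B₁) ⧸ range(B₂). -/
open Matrix

private lemma sq_zero_aux (a b : ℕ) (A : Matrix (Fin a) (Fin b) ℝ) (x : Fin b → ℝ)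
    (h : x ⬝ᵥ (Aᵀ *ᵥ (A *ᵥ x)) = 0) : A *ᵥ x = 0 := by
  rw [dotProduct_mulVec, vecMul_transpose] at h
  exact dotProduct_self_eq_zero.mp h

private lemma key_aux (m n p : ℕ)
    (B₁ : Matrix (Fin m) (Fin n) ℝ) (B₂ : Matrix (Fin n) (Fin p) ℝ)
    (L : Matrix (Fin n) (Fin n) ℝ) (hL : L = B₁ᵀ * B₁ + B₂ * B₂ᵀ)
    (x : Fin n → ℝ) (hx : L *ᵥ x = 0) : B₁ *ᵥ x = 0 ∧ B₂ᵀ *ᵥ x = 0 := by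
  have h0 : x ⬝ᵥ (B₁ᵀ *ᵥ (B₁ *ᵥ x)) + x ⬝ᵥ (B₂ᵀᵀ *ᵥ (B₂ᵀ *ᵥ x)) = 0 := by
    have := congrArg (fun v => x ⬝ᵥ v) hx
    simp only [hL, add_mulVec, ← mulVec_mulVec, dotProduct_add, dotProduct_zero,
      transpose_transpose] at this ⊢
    exact this
  have h1 : x ⬝ᵥ (B₁ᵀ *ᵥ (B₁ *ᵥ x)) = (B₁ *ᵥ x) ⬝ᵥ (B₁ *ᵥ x) := by
    rw [dotProduct_mulVec, vecMul_transpose]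
  have h2 : x ⬝ᵥ (B₂ᵀᵀ *ᵥ (B₂ᵀ *ᵥ x)) = (B₂ᵀ *ᵥ x) ⬝ᵥ (B₂ᵀ *ᵥ x) := by
    rw [dotProduct_mulVec, vecMul_transpose]
  have n1 : 0 ≤ (B₁ *ᵥ x) ⬝ᵥ (B₁ *ᵥ x) := by
    simpa using dotProduct_self_star_nonneg (B₁ *ᵥ x)
  have n2 : 0 ≤ (B₂ᵀ *ᵥ x) ⬝ᵥ (B₂ᵀ *ᵥ x) := by
    simpa using dotProduct_self_star_nonneg (B₂ᵀ *ᵥ x)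
  rw [h1, h2] at h0
  constructor
  · exact dotProduct_self_eq_zero.mp (by linarith)
  · exact dotProduct_self_eq_zero.mp (by linarith)

private lemma compl_aux (n : ℕ) (L : Matrix (Fin n) (Fin n) ℝ) (hsym : Lᵀ = L) :
    LinearMap.ker L.mulVecLin ⊔ LinearMap.range L.mulVecLin = ⊤ := by
  have hdisj : LinearMap.ker L.mulVecLin ⊓ LinearMap.range L.mulVecLin = ⊥ := by
    rw [Submodule.eq_bot_iff]
    rintro v ⟨hk, w, rfl⟩
    have hk : L *ᵥ (L *ᵥ w) = 0 := hk
    have : (L.mulVecLin w) ⬝ᵥ (L.mulVecLin w) = 0 := by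
      rw [mulVecLin_apply, dotProduct_comm, dotProduct_mulVec]
      rw [← hsym, vecMul_transpose, hsym, hk, zero_dotProduct]
    exact dotProduct_self_eq_zero.mp this
  have hfr := Submodule.finrank_sup_add_finrank_inf_eq
    (LinearMap.ker L.mulVecLin) (LinearMap.range L.mulVecLin)
  rw [hdisj, finrank_bot, add_zero] at hfr
  have hrn := LinearMap.finrank_range_add_finrank_ker L.mulVecLin
  apply Submodule.eq_top_of_finrank_eq
  omega

/-- For real matrices `B₁ : m × n` and `B₂ : n × p` with `B₁ * B₂ = 0` and Hodge Laplacian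
`L := B₁ᵀ * B₁ + B₂ * B₂ᵀ`: since `ker L ⊆ ker B₁` and `range B₂ ⊆ ker B₁`, the quotient
map `ker B₁ → ker B₁ ⧸ range B₂` restricts on the harmonic space `ker L` to a linear
isomorphism onto the homology `ker B₁ ⧸ range B₂`. -/
theorem harmonic_iso_homology (m n p : ℕ)
    (B₁ : Matrix (Fin m) (Fin n) ℝ) (B₂ : Matrix (Fin n) (Fin p) ℝ)
    (hB : B₁ * B₂ = 0)
    (L : Matrix (Fin n) (Fin n) ℝ) (hL : L = B₁ᵀ * B₁ + B₂ * B₂ᵀ)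
    (hHK : LinearMap.ker L.mulVecLin ≤ LinearMap.ker B₁.mulVecLin)
    (hCK : LinearMap.range B₂.mulVecLin ≤ LinearMap.ker B₁.mulVecLin) :
    Function.Bijective
      (((Submodule.comap (LinearMap.ker B₁.mulVecLin).subtype
          (LinearMap.range B₂.mulVecLin)).mkQ).comp
        (Submodule.inclusion hHK)) := by
  have hsym : Lᵀ = L := by
    rw [hL]; simp [Matrix.transpose_add, Matrix.transpose_mul]
  constructor
  · rw [injective_iff_map_eq_zero]
    rintro ⟨x, hx⟩ hx0
    rw [LinearMap.mem_ker, mulVecLin_apply] at hx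
    simp only [LinearMap.comp_apply, Submodule.mkQ_apply, Submodule.Quotient.mk_eq_zero,
      Submodule.mem_comap, Submodule.subtype_apply, Submodule.inclusion_apply] at hx0
    obtain ⟨y, hy⟩ := hx0
    rw [mulVecLin_apply] at hy
    have h2 : B₂ᵀ *ᵥ x = 0 := (key_aux m n p B₁ B₂ L hL x hx).2
    have : x ⬝ᵥ x = 0 := by
      conv_lhs => rw [← hy]
      rw [dotProduct_comm, dotProduct_mulVec, ← mulVec_transpose, hy, h2, zero_dotProduct]
    have hx0' : x = 0 := dotProduct_self_eq_zero.mp this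
    exact Subtype.ext (by simp [hx0'])
  · intro q
    obtain ⟨⟨x, hx⟩, rfl⟩ := Submodule.mkQ_surjective _ q
    have hxB : B₁ *ᵥ x = 0 := by rwa [LinearMap.mem_ker, mulVecLin_apply] at hx
    have hx_top : x ∈ LinearMap.ker L.mulVecLin ⊔ LinearMap.range L.mulVecLin := by
      rw [compl_aux n L hsym]; trivial
    obtain ⟨h, hhk, r, hrr, hsum⟩ := Submodule.mem_sup.mp hx_top
    obtain ⟨z, rfl⟩ := hrr
    rw [mulVecLin_apply] at *
    have hhB : B₁ *ᵥ h = 0 := by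
      have := hHK hhk
      rwa [LinearMap.mem_ker, mulVecLin_apply] at this
    have hrB : B₁ *ᵥ (L *ᵥ z) = 0 := by
      have : B₁ *ᵥ (h + L *ᵥ z) = 0 := by rw [hsum]; exact hxB
      rwa [mulVec_add, hhB, zero_add] at this
    have hLz : L *ᵥ z = B₁ᵀ *ᵥ (B₁ *ᵥ z) + B₂ *ᵥ (B₂ᵀ *ᵥ z) := by
      rw [hL, add_mulVec, ← mulVec_mulVec, ← mulVec_mulVec]
    have hBw : B₁ *ᵥ (B₂ *ᵥ (B₂ᵀ *ᵥ z)) = 0 := by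
      rw [mulVec_mulVec, hB, zero_mulVec]
    have hBu : B₁ *ᵥ (B₁ᵀ *ᵥ (B₁ *ᵥ z)) = 0 := by
      have := hrB
      rw [hLz, mulVec_add, hBw, add_zero] at this
      exact this
    have hu : B₁ᵀ *ᵥ (B₁ *ᵥ z) = 0 := by
      have : (B₁ᵀ *ᵥ (B₁ *ᵥ z)) ⬝ᵥ (B₁ᵀ *ᵥ (B₁ *ᵥ z)) = 0 := by
        rw [dotProduct_mulVec, vecMul_transpose, hBu, zero_dotProduct]
      exact dotProduct_self_eq_zero.mp this
    have hrng : x - h ∈ LinearMap.range B₂.mulVecLin := by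
      refine ⟨B₂ᵀ *ᵥ z, ?_⟩
      rw [mulVecLin_apply, ← hsum, hLz, hu, zero_add]
      ring
    have hhk' : h ∈ LinearMap.ker L.mulVecLin := hhk
    refine ⟨⟨h, hhk'⟩, ?_⟩
    simp only [LinearMap.comp_apply, Submodule.mkQ_apply]
    rw [Submodule.Quotient.eq]
    simp only [Submodule.mem_comap, Submodule.subtype_apply]
    have : ((Submodule.inclusion hHK ⟨h, hhk'⟩ : LinearMap.ker B₁.mulVecLin) -
        ⟨x, hx⟩ : LinearMap.ker B₁.mulVecLin).val = h - x := rfl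
    rw [this]
    exact (LinearMap.range B₂.mulVecLin).neg_mem_iff.mp (by simpa using hrng)
end

section
/- Let B₁ and B₂ be real matrices of sizes m×n and n×p with B₁ * B₂ = 0, and let L := B₁ᵀB₁ + B₂B₂ᵀ. Then range(L) = range(B₁ᵀ) ⊔ range(B₂) (the sum of the gradient and curl subspaces), and ℝⁿ is the internal direct sum of ker(L) and range(L). -/
open Matrix

/-- For a real matrix `M`, `range (MᵀM) = range Mᵀ`. -/
lemma range_transpose_mul_self_aux {a b : ℕ} (M : Matrix (Fin a) (Fin b) ℝ) :
    LinearMap.range (Mᵀ * M).mulVecLin = LinearMap.range Mᵀ.mulVecLin := by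
  apply Submodule.eq_of_le_of_finrank_le
  · rintro _ ⟨x, rfl⟩
    exact ⟨M *ᵥ x, by simp [mulVecLin_apply, mulVec_mulVec]⟩
  · have h1 : (Mᵀ * M).rank = M.rank := Matrix.rank_transpose_mul_self M
    have h2 : Mᵀ.rank = M.rank := Matrix.rank_transpose M
    simpa [Matrix.rank] using (h2.trans h1.symm).le

/-- For real matrices `B₁ : m × n` and `B₂ : n × p` with `B₁ * B₂ = 0` and Hodge Laplacian
`L := B₁ᵀ * B₁ + B₂ * B₂ᵀ`: the range of `L` is the sum of the gradient space `range B₁ᵀ`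
and the curl space `range B₂`, and `ℝⁿ` is the internal direct sum of `ker L` and
`range L`. -/
theorem range_hodgeLaplacian_and_decomposition (m n p : ℕ)
    (B₁ : Matrix (Fin m) (Fin n) ℝ) (B₂ : Matrix (Fin n) (Fin p) ℝ)
    (hB : B₁ * B₂ = 0)
    (L : Matrix (Fin n) (Fin n) ℝ) (hL : L = B₁ᵀ * B₁ + B₂ * B₂ᵀ) :
    LinearMap.range L.mulVecLin
        = LinearMap.range B₁ᵀ.mulVecLin ⊔ LinearMap.range B₂.mulVecLin ∧
      Disjoint (LinearMap.ker L.mulVecLin) (LinearMap.range L.mulVecLin) ∧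
      LinearMap.ker L.mulVecLin ⊔ LinearMap.range L.mulVecLin = ⊤ := by
  have hBt : B₂ᵀ * B₁ᵀ = 0 := by
    rw [← transpose_mul, hB, transpose_zero]
  -- range (B₁ᵀB₁) = range B₁ᵀ
  have hr1 : LinearMap.range (B₁ᵀ * B₁).mulVecLin = LinearMap.range B₁ᵀ.mulVecLin :=
    range_transpose_mul_self_aux B₁
  -- range (B₂B₂ᵀ) = range B₂
  have hr2 : LinearMap.range (B₂ * B₂ᵀ).mulVecLin = LinearMap.range B₂.mulVecLin := by
    have := range_transpose_mul_self_aux B₂ᵀ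
    simpa using this
  -- symmetry of L
  have hLsymm : Lᵀ = L := by
    rw [hL]; simp [transpose_add, transpose_mul]
  have hrange : LinearMap.range L.mulVecLin
      = LinearMap.range B₁ᵀ.mulVecLin ⊔ LinearMap.range B₂.mulVecLin := by
    apply le_antisymm
    · rintro _ ⟨x, rfl⟩
      rw [hL]
      have hx : (B₁ᵀ * B₁ + B₂ * B₂ᵀ).mulVecLin x
          = B₁ᵀ.mulVecLin (B₁ *ᵥ x) + B₂.mulVecLin (B₂ᵀ *ᵥ x) := by
        simp only [mulVecLin_apply, add_mulVec, mulVec_mulVec]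
      rw [hx]
      exact Submodule.add_mem_sup (LinearMap.mem_range_self _ _) (LinearMap.mem_range_self _ _)
    · refine sup_le ?_ ?_
      · rw [← hr1]
        have hsq : LinearMap.range ((B₁ᵀ * B₁)ᵀ * (B₁ᵀ * B₁)).mulVecLin
            = LinearMap.range (B₁ᵀ * B₁).mulVecLin := by
          simpa only [transpose_mul, transpose_transpose] using
            range_transpose_mul_self_aux (B₁ᵀ * B₁)
        rw [← hsq]
        rintro _ ⟨x, rfl⟩
        refine ⟨(B₁ᵀ * B₁) *ᵥ x, ?_⟩
        have h0 : B₂ * B₂ᵀ * (B₁ᵀ * B₁) = 0 := by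
          rw [Matrix.mul_assoc, ← Matrix.mul_assoc B₂ᵀ, hBt, Matrix.zero_mul, Matrix.mul_zero]
        have key : (B₁ᵀ * B₁ + B₂ * B₂ᵀ) * (B₁ᵀ * B₁) = (B₁ᵀ * B₁)ᵀ * (B₁ᵀ * B₁) := by
          rw [add_mul, h0, add_zero, transpose_mul, transpose_transpose]
        rw [hL]
        simp only [mulVecLin_apply, mulVec_mulVec, key]
      · rw [← hr2]
        have hsq : LinearMap.range ((B₂ * B₂ᵀ)ᵀ * (B₂ * B₂ᵀ)).mulVecLin
            = LinearMap.range (B₂ * B₂ᵀ).mulVecLin := by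
          simpa only [transpose_mul, transpose_transpose] using
            range_transpose_mul_self_aux (B₂ * B₂ᵀ)
        rw [← hsq]
        rintro _ ⟨x, rfl⟩
        refine ⟨(B₂ * B₂ᵀ) *ᵥ x, ?_⟩
        have h0 : B₁ᵀ * B₁ * (B₂ * B₂ᵀ) = 0 := by
          rw [Matrix.mul_assoc, ← Matrix.mul_assoc B₁, hB, Matrix.zero_mul, Matrix.mul_zero]
        have key : (B₁ᵀ * B₁ + B₂ * B₂ᵀ) * (B₂ * B₂ᵀ) = (B₂ * B₂ᵀ)ᵀ * (B₂ * B₂ᵀ) := by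
          rw [add_mul, h0, zero_add, transpose_mul, transpose_transpose]
        rw [hL]
        simp only [mulVecLin_apply, mulVec_mulVec, key]
  have hdisj : Disjoint (LinearMap.ker L.mulVecLin) (LinearMap.range L.mulVecLin) := by
    rw [Submodule.disjoint_def]
    rintro x hker ⟨y, hy⟩
    have hx0 : L *ᵥ x = 0 := hker
    have hxy : x = L *ᵥ y := hy.symm
    have hself : x ⬝ᵥ x = 0 := by
      calc x ⬝ᵥ x = x ⬝ᵥ (L *ᵥ y) := by rw [← hxy]
        _ = (x ᵥ* L) ⬝ᵥ y := (dotProduct_mulVec x L y)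
        _ = (Lᵀ *ᵥ x) ⬝ᵥ y := by rw [← vecMul_transpose, transpose_transpose]
        _ = 0 := by rw [hLsymm, hx0, zero_dotProduct]
    exact dotProduct_self_eq_zero.mp hself
  refine ⟨hrange, hdisj, ?_⟩
  apply Submodule.eq_top_of_finrank_eq
  have h1 := LinearMap.finrank_range_add_finrank_ker L.mulVecLin
  have h2 := Submodule.finrank_sup_add_finrank_inf_eq
    (LinearMap.ker L.mulVecLin) (LinearMap.range L.mulVecLin)
  rw [hdisj.eq_bot] at h2
  simp only [finrank_bot, add_zero] at h2
  rw [h2, add_comm, h1]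
end
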